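/- On the monoid QM = ⟨x, y, q | xq = qx, yq = qy, yx = xyq⟩, the relation ≺ defined by x^k y^l q^m ≺ x^{k'} y^{l'} q^{m'} iff (k > k') or (k = k' and l < l') or (k = k', l = l', m < m') is a partial order compatible with multiplication: if a ≺ a' and b ≺ b' then ab ≺ a'b'. -/

import Mathlib

/- On QM = ⟨x, y, q | xq = qx, yq = qy, yx = xyq⟩, the relation ≺ comparing
normal forms x^k y^l q^m by (k > k') or (k = k', l < l') or (k = k', l = l', m < m')
is a (strict) partial order compatible with multiplication:
a ≺ a' and b ≺ b' imply ab ≺ a'b'. -/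

namespace Stmt1

inductive QMrel : FreeMonoid (Fin 3) → FreeMonoid (Fin 3) → Prop
  | xq : QMrel (FreeMonoid.of 0 * FreeMonoid.of 2) (FreeMonoid.of 2 * FreeMonoid.of 0)
  | yq : QMrel (FreeMonoid.of 1 * FreeMonoid.of 2) (FreeMonoid.of 2 * FreeMonoid.of 1)
  | yx : QMrel (FreeMonoid.of 1 * FreeMonoid.of 0)
      (FreeMonoid.of 0 * FreeMonoid.of 1 * FreeMonoid.of 2)

def QM := (conGen QMrel).Quotient

noncomputable instance : Monoid QM := Con.monoid _

noncomputable def x : QM := (conGen QMrel).mk' (FreeMonoid.of 0)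
noncomputable def y : QM := (conGen QMrel).mk' (FreeMonoid.of 1)
noncomputable def q : QM := (conGen QMrel).mk' (FreeMonoid.of 2)

/-- The normal form `x^k * y^l * q^m` associated to the triple `(k, l, m)`. -/
noncomputable def nf (t : ℕ × ℕ × ℕ) : QM := x ^ t.1 * y ^ t.2.1 * q ^ t.2.2

/-- The comparison of triples: `(k,l,m) ≺ (k',l',m')` iff `k > k'`, or `k = k'` and
`l < l'`, or `k = k'`, `l = l'` and `m < m'`. -/
def lexlt (t t' : ℕ × ℕ × ℕ) : Prop :=
  t'.1 < t.1 ∨ (t.1 = t'.1 ∧ t.2.1 < t'.2.1) ∨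
    (t.1 = t'.1 ∧ t.2.1 = t'.2.1 ∧ t.2.2 < t'.2.2)

/-- The relation `≺` on `QM`, defined via normal forms. -/
def prec (a b : QM) : Prop := ∃ t t' : ℕ × ℕ × ℕ, a = nf t ∧ b = nf t' ∧ lexlt t t'

/-
Since `y^l x^k = x^k y^l q^(l k)` and `q` is central, normal forms multiply by the rule
`(k, l, m) (k', l', m') = (k + k', l + l', m + m' + l k')`. This rule makes `ℕ³` a monoid
receiving a hom from `QM` which inverts `nf`, so normal forms are unique and `≺` is a
well-defined strict order; compatibility with products is then a statement about triples.
-/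

/-- Normal forms `x^k y^l q^m` as triples `(k, l, m)`, multiplied as in `QM`. -/
@[ext] structure Heis where
  k : ℕ
  l : ℕ
  m : ℕ

namespace Heis

instance : Mul Heis := ⟨fun s t => ⟨s.k + t.k, s.l + t.l, s.m + t.m + s.l * t.k⟩⟩

instance : One Heis := ⟨⟨0, 0, 0⟩⟩

@[simp] theorem k_mul (s t : Heis) : (s * t).k = s.k + t.k := rfl
@[simp] theorem l_mul (s t : Heis) : (s * t).l = s.l + t.l := rfl
@[simp] theorem m_mul (s t : Heis) : (s * t).m = s.m + t.m + s.l * t.k := rfl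
@[simp] theorem k_one : (1 : Heis).k = 0 := rfl
@[simp] theorem l_one : (1 : Heis).l = 0 := rfl
@[simp] theorem m_one : (1 : Heis).m = 0 := rfl

instance : Monoid Heis where
  mul_assoc s t u := by ext <;> simp only [k_mul, l_mul, m_mul] <;> ring
  one_mul s := by ext <;> simp
  mul_one s := by ext <;> simp

theorem pow_eq (t : Heis) (n : ℕ) :
    t ^ n = ⟨n * t.k, n * t.l, n * t.m + n.choose 2 * (t.l * t.k)⟩ := by
  induction n with
  | zero => ext <;> simp
  | succ n ih =>
    rw [pow_succ, ih, Nat.choose_succ_succ', Nat.choose_one_right]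
    ext <;> simp only [k_mul, l_mul, m_mul] <;> ring

end Heis

section heisLift

variable {M : Type*} [Monoid M] {a b c : M}

theorem pow_mul_pow_eq_of_mul_eq_mul_mul (hca : Commute c a) (hcb : Commute c b)
    (hba : b * a = a * b * c) (k l : ℕ) :
    b ^ l * a ^ k = a ^ k * b ^ l * c ^ (l * k) := by
  have hb : ∀ k : ℕ, b * a ^ k = a ^ k * (b * c ^ k) := by
    intro k
    induction k with
    | zero => simp
    | succ k ih =>
      calc b * a ^ (k + 1) = a ^ k * b * (c ^ k * a) := by
            rw [pow_succ, ← mul_assoc, ih]; simp only [mul_assoc]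
        _ = a ^ (k + 1) * (b * c ^ (k + 1)) := by
          rw [(hca.pow_left k).eq, ← mul_assoc, mul_assoc (a ^ k), hba]
          rw [pow_succ a, pow_succ' c]; simp only [mul_assoc]
  have hconj : SemiconjBy (a ^ k) (b * c ^ k) b := (hb k).symm
  rw [← (hconj.pow_right l).eq, (hcb.pow_left k).symm.mul_pow, ← pow_mul, mul_comm k,
    mul_assoc]

def heisLift (hca : Commute c a) (hcb : Commute c b) (hba : b * a = a * b * c) : Heis →* M where
  toFun t := a ^ t.k * b ^ t.l * c ^ t.m
  map_one' := by simp
  map_mul' s t := by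
    have hcb' : Commute (c ^ (s.l * t.k + s.m)) (b ^ t.l) := hcb.pow_pow _ _
    calc a ^ (s.k + t.k) * b ^ (s.l + t.l) * c ^ (s.m + t.m + s.l * t.k)
        = a ^ s.k * a ^ t.k * b ^ s.l * (b ^ t.l * c ^ (s.l * t.k + s.m)) * c ^ t.m := by
          rw [show s.m + t.m + s.l * t.k = s.l * t.k + s.m + t.m by ring]
          simp only [pow_add, mul_assoc]
      _ = a ^ s.k * (a ^ t.k * b ^ s.l * c ^ (s.l * t.k)) * (c ^ s.m * b ^ t.l * c ^ t.m) := by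
          rw [← hcb'.eq, pow_add c]
          simp only [mul_assoc]
      _ = a ^ s.k * b ^ s.l * c ^ s.m * (a ^ t.k * b ^ t.l * c ^ t.m) := by
          rw [← pow_mul_pow_eq_of_mul_eq_mul_mul hca hcb hba]
          simp only [mul_assoc, (hca.pow_pow s.m t.k).left_comm]

end heisLift

theorem mk'_eq_of_QMrel {u v : FreeMonoid (Fin 3)} (h : QMrel u v) :
    (conGen QMrel).mk' u = (conGen QMrel).mk' v :=
  (Con.eq _).mpr (ConGen.Rel.of _ _ h)

theorem commute_q_x : Commute q x := (mk'_eq_of_QMrel .xq).symm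

theorem commute_q_y : Commute q y := (mk'_eq_of_QMrel .yq).symm

theorem y_mul_x : y * x = x * y * q := mk'_eq_of_QMrel .yx

theorem nf_mul (s t : ℕ × ℕ × ℕ) :
    nf s * nf t = nf (s.1 + t.1, s.2.1 + t.2.1, s.2.2 + t.2.2 + s.2.1 * t.1) := by
  have nf_eq (u : ℕ × ℕ × ℕ) :
      nf u = heisLift commute_q_x commute_q_y y_mul_x ⟨u.1, u.2.1, u.2.2⟩ := rfl
  rw [nf_eq, nf_eq, nf_eq, ← map_mul]
  rfl

def toHeis : QM →* Heis :=
  Con.lift _ (FreeMonoid.lift ![⟨1, 0, 0⟩, ⟨0, 1, 0⟩, ⟨0, 0, 1⟩])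
    (Con.conGen_le.mpr fun _ _ h => by cases h <;> rfl)

theorem toHeis_nf (t : ℕ × ℕ × ℕ) : toHeis (nf t) = ⟨t.1, t.2.1, t.2.2⟩ := by
  have hx : toHeis x = ⟨1, 0, 0⟩ := rfl
  have hy : toHeis y = ⟨0, 1, 0⟩ := rfl
  have hq : toHeis q = ⟨0, 0, 1⟩ := rfl
  ext <;> simp [nf, hx, hy, hq, Heis.pow_eq]

theorem nf_injective : Function.Injective nf := fun s t h => by
  simpa [Prod.ext_iff, toHeis_nf] using congrArg toHeis h

theorem lexlt_irrefl (t : ℕ × ℕ × ℕ) : ¬ lexlt t t := by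
  unfold lexlt; omega

theorem lexlt_trans {s t u : ℕ × ℕ × ℕ} (hst : lexlt s t) (htu : lexlt t u) : lexlt s u := by
  unfold lexlt at *; omega

/-- The correction terms `l * k` only matter when the first two coordinates tie, and then
they tie as well. -/
theorem lexlt_mul {s s' t t' : ℕ × ℕ × ℕ} (hs : lexlt s s') (ht : lexlt t t') :
    lexlt (s.1 + t.1, s.2.1 + t.2.1, s.2.2 + t.2.2 + s.2.1 * t.1)
      (s'.1 + t'.1, s'.2.1 + t'.2.1, s'.2.2 + t'.2.2 + s'.2.1 * t'.1) := by
  obtain ⟨k, l, m⟩ := s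
  obtain ⟨k', l', m'⟩ := s'
  obtain ⟨i, j, n⟩ := t
  obtain ⟨i', j', n'⟩ := t'
  unfold lexlt at *
  dsimp only at *
  rcases hs with hk | ⟨rfl, hl⟩ | ⟨rfl, rfl, hm⟩ <;>
    rcases ht with hi | ⟨rfl, hj⟩ | ⟨rfl, rfl, hn⟩ <;> omega

theorem stmt1 :
    (∀ a : QM, ¬ prec a a) ∧
    (∀ a b c : QM, prec a b → prec b c → prec a c) ∧
    (∀ a a' b b' : QM, prec a a' → prec b b' → prec (a * b) (a' * b')) := by
  refine ⟨?_, ?_, ?_⟩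
  · rintro _ ⟨t, t', rfl, h, ht⟩
    exact lexlt_irrefl t (nf_injective h ▸ ht)
  · rintro _ _ _ ⟨s, s', rfl, rfl, hs⟩ ⟨t, t', h, rfl, ht⟩
    exact ⟨s, t', rfl, rfl, lexlt_trans hs (nf_injective h ▸ ht)⟩
  · rintro _ _ _ _ ⟨s, s', rfl, rfl, hs⟩ ⟨t, t', rfl, rfl, ht⟩
    exact ⟨_, _, nf_mul s t, nf_mul s' t', lexlt_mul hs ht⟩

end Stmt1
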